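/- Consider n agents, each with a pair-demand valuation given by item weights, and a set of items M with |M| ≥ 2n. Run a two-stage picking procedure: in stage 1, agents 1, 2, ..., n in increasing order each pick a remaining item maximizing their single-item weight; in stage 2, agents n, n−1, ..., 1 in decreasing order each pick a remaining item maximizing their single-item weight; leftover items are given arbitrarily. Then the resulting allocation satisfies PMMS: for every pair of agents i, j, v_i(X_i) ≥ μ_i(X_i ∪ X_j). -/

import Mathlib

open Finset

/-- Pair-demand valuation: the best sum of at most two item weights in the bundle. -/
noncomputable def pd {α : Type*} [DecidableEq α] (w : α → ℝ) (S : Finset α) : ℝ :=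
  (S.powerset.filter fun T => T.card ≤ 2).sup' ⟨∅, by simp⟩ fun T => ∑ j ∈ T, w j

/-- Two-part maximin share: max over partitions (A, S \ A) of S of the min value. -/
noncomputable def mu {α : Type*} [DecidableEq α] (v : Finset α → ℝ) (S : Finset α) : ℝ :=
  S.powerset.sup' ⟨∅, Finset.empty_mem_powerset S⟩ fun A => min (v A) (v (S \ A))

/-- The items remaining before agent `i`'s pick in stage 1
(agents pick in increasing order of indices). -/
def stage1Pool {α : Type*} [DecidableEq α] {n : ℕ} (M : Finset α)
    (g : Fin n → α) (i : Fin n) : Finset α :=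
  M \ ((Finset.univ.filter fun k => k < i).image g)

/-- The items remaining before agent `i`'s pick in stage 2
(agents pick in decreasing order of indices). -/
def stage2Pool {α : Type*} [DecidableEq α] {n : ℕ} (M : Finset α)
    (g h : Fin n → α) (i : Fin n) : Finset α :=
  (M \ (Finset.univ.image g)) \ ((Finset.univ.filter fun k => i < k).image h)

/-!
Agent `i` values its own bundle at least `a + b`, where `a` and `b` are the weights of its
first and second pick. In `Y i ∪ Y j`, every item other than `g j` was still available at
`i`'s first pick, and every item other than `g i`, `g j`, `h j` at its second pick; moreover
`g j` is also available at the first pick if `i < j`, and `h j` at the second if `j < i`.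
So if `i < j`, no item of the union weighs more than `a` and at most three weigh more than `b`;
if `j < i`, only `g j` can weigh more than `a` and only `g i`, `g j` more than `b`. Either way,
in any split of the union into two parts, one part has all weights at most `a` and at most one
weight above `b`, and such a part is worth at most `a + b` to a pair-demand agent.
-/

section PairDemand

variable {α : Type*} [DecidableEq α] {w : α → ℝ} {S : Finset α}

lemma pd_le_of {c : ℝ} (h0 : 0 ≤ c) (h1 : ∀ x ∈ S, w x ≤ c)
    (h2 : ∀ x ∈ S, ∀ y ∈ S, x ≠ y → w x + w y ≤ c) : pd w S ≤ c := by
  refine sup'_le _ _ fun T hT => ?_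
  obtain ⟨hTS, hT2⟩ : T ⊆ S ∧ #T ≤ 2 := by simpa using hT
  interval_cases hT : #T
  · simp [card_eq_zero.mp hT, h0]
  · obtain ⟨x, rfl⟩ := card_eq_one.mp hT
    simpa using h1 x (hTS (mem_singleton_self x))
  · obtain ⟨x, y, hxy, rfl⟩ := card_eq_two.mp hT
    rw [sum_pair hxy]
    exact h2 x (hTS (by simp)) y (hTS (by simp)) hxy

lemma add_le_pd {x y : α} (hx : x ∈ S) (hy : y ∈ S) (hxy : x ≠ y) :
    w x + w y ≤ pd w S := by
  have hT : {x, y} ∈ S.powerset.filter fun T => #T ≤ 2 := by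
    simp [insert_subset_iff, hx, hy, card_le_two]
  exact (sum_pair hxy).symm.trans_le (le_sup' (fun T => ∑ j ∈ T, w j) hT)

lemma pd_le_add {a b : ℝ} (hb : 0 ≤ b) (hba : b ≤ a) (ha : ∀ x ∈ S, w x ≤ a)
    (hbig : ∀ x ∈ S, ∀ y ∈ S, b < w x → b < w y → x = y) : pd w S ≤ a + b := by
  refine pd_le_of (by linarith) (fun x hx => by linarith [ha x hx]) fun x hx y hy hxy => ?_
  by_cases hxb : b < w x
  · have : w y ≤ b := not_lt.mp fun hyb => hxy (hbig x hx y hy hxb hyb)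
    linarith [ha x hx]
  · linarith [ha y hy]

lemma mu_le {v : Finset α → ℝ} {c : ℝ} (h : ∀ A ⊆ S, v A ≤ c ∨ v (S \ A) ≤ c) :
    mu v S ≤ c :=
  sup'_le _ _ fun A hA => (h A (mem_powerset.mp hA)).elim min_le_of_left_le min_le_of_right_le

lemma mu_pd_le_add_of_card_le_three {a b : ℝ} (hb : 0 ≤ b) (hba : b ≤ a)
    (ha : ∀ x ∈ S, w x ≤ a) (E : Finset α) (hE : #E ≤ 3)
    (hbig : ∀ x ∈ S, b < w x → x ∈ E) : mu (pd w) S ≤ a + b := by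
  have side : ∀ C ⊆ S, #(C ∩ E) ≤ 1 → pd w C ≤ a + b := fun C hC hC1 =>
    pd_le_add hb hba (fun x hx => ha x (hC hx)) fun x hx y hy hxb hyb =>
      card_le_one.mp hC1 x (mem_inter.2 ⟨hx, hbig x (hC hx) hxb⟩)
        y (mem_inter.2 ⟨hy, hbig y (hC hy) hyb⟩)
  refine mu_le fun A hA => ?_
  have hsplit : #(A ∩ E) + #((S \ A) ∩ E) ≤ 3 := by
    rw [← card_union_of_disjoint (disjoint_sdiff.mono inter_subset_left inter_subset_left)]
    exact (card_le_card (union_subset inter_subset_right inter_subset_right)).trans hE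
  by_cases hA1 : #(A ∩ E) ≤ 1
  · exact .inl (side A hA hA1)
  · exact .inr (side _ sdiff_subset (by omega))

lemma mu_pd_le_add_of_big_mem_pair {a b : ℝ} (hb : 0 ≤ b) (hba : b ≤ a) (e f : α)
    (ha : ∀ x ∈ S, x ≠ f → w x ≤ a) (hbig : ∀ x ∈ S, b < w x → x = e ∨ x = f) :
    mu (pd w) S ≤ a + b := by
  have side : ∀ C ⊆ S, f ∉ C → pd w C ≤ a + b := fun C hC hfC =>
    have hne : ∀ x ∈ C, x ≠ f := fun x hx hxf => hfC (hxf ▸ hx)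
    have hbig' : ∀ x ∈ C, b < w x → x = e := fun x hx hxb =>
      (hbig x (hC hx) hxb).resolve_right (hne x hx)
    pd_le_add hb hba (fun x hx => ha x (hC hx) (hne x hx)) fun x hx y hy hxb hyb =>
      (hbig' x hx hxb).trans (hbig' y hy hyb).symm
  refine mu_le fun A hA => ?_
  by_cases hfA : f ∈ A
  · exact .inr (side _ sdiff_subset fun hf => (mem_sdiff.mp hf).2 hfA)
  · exact .inl (side A hA hfA)

end PairDemand

lemma eq_or_eq_of_mem_of_mem_union {ι α : Type*} [DecidableEq α] {Y : ι → Finset α}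
    (hY : ∀ i j, i ≠ j → Disjoint (Y i) (Y j)) {i j k : ι} {x : α}
    (hk : x ∈ Y k) (hx : x ∈ Y i ∪ Y j) : k = i ∨ k = j := by
  by_contra! hne
  rcases mem_union.mp hx with hx | hx
  · exact disjoint_left.mp (hY k i hne.1) hk hx
  · exact disjoint_left.mp (hY k j hne.2) hk hx

section Picking

variable {α : Type*} [DecidableEq α] {n : ℕ} {M : Finset α} {g h : Fin n → α}

lemma mem_stage1Pool {i : Fin n} {x : α} :
    x ∈ stage1Pool M g i ↔ x ∈ M ∧ ∀ k < i, g k ≠ x := by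
  simp [stage1Pool]

lemma mem_stage2Pool {i : Fin n} {x : α} :
    x ∈ stage2Pool M g h i ↔ x ∈ M ∧ (∀ k, g k ≠ x) ∧ ∀ k, i < k → h k ≠ x := by
  simp [stage2Pool, and_assoc]

variable {v : α → ℝ} {i j : Fin n}

lemma second_pick_le_first (hh_mem : h i ∈ stage2Pool M g h i)
    (hg_max : ∀ x ∈ stage1Pool M g i, v x ≤ v (g i)) : v (h i) ≤ v (g i) := by
  obtain ⟨hM, hg, -⟩ := mem_stage2Pool.mp hh_mem
  exact hg_max _ (mem_stage1Pool.mpr ⟨hM, fun k _ => hg k⟩)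

lemma later_first_pick_le (hg_mem : g j ∈ stage1Pool M g j)
    (hg_max : ∀ x ∈ stage1Pool M g i, v x ≤ v (g i)) (hij : i < j) : v (g j) ≤ v (g i) := by
  obtain ⟨hM, hne⟩ := mem_stage1Pool.mp hg_mem
  exact hg_max _ (mem_stage1Pool.mpr ⟨hM, fun k hk => hne k (hk.trans hij)⟩)

lemma earlier_second_pick_le (hh_mem : h j ∈ stage2Pool M g h j)
    (hh_max : ∀ x ∈ stage2Pool M g h i, v x ≤ v (h i)) (hji : j < i) :
    v (h j) ≤ v (h i) := by
  obtain ⟨hM, hg, hne⟩ := mem_stage2Pool.mp hh_mem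
  exact hh_max _ (mem_stage2Pool.mpr ⟨hM, hg, fun k hk => hne k (hji.trans hk)⟩)

variable {Y : Fin n → Finset α} {x : α}

lemma le_first_pick (hg_max : ∀ x ∈ stage1Pool M g i, v x ≤ v (g i))
    (hY_sub : ∀ k, Y k ⊆ M) (hY_disj : ∀ k l, k ≠ l → Disjoint (Y k) (Y l))
    (hg_picks : ∀ k, g k ∈ Y k) (hx : x ∈ Y i ∪ Y j) (hxj : x ≠ g j) : v x ≤ v (g i) := by
  refine hg_max x (mem_stage1Pool.mpr ⟨union_subset (hY_sub i) (hY_sub j) hx, ?_⟩)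
  rintro k hki rfl
  rcases eq_or_eq_of_mem_of_mem_union hY_disj (hg_picks k) hx with rfl | rfl
  exacts [lt_irrefl k hki, hxj rfl]

lemma le_second_pick (hh_max : ∀ x ∈ stage2Pool M g h i, v x ≤ v (h i))
    (hY_sub : ∀ k, Y k ⊆ M) (hY_disj : ∀ k l, k ≠ l → Disjoint (Y k) (Y l))
    (hg_picks : ∀ k, g k ∈ Y k) (hh_picks : ∀ k, h k ∈ Y k)
    (hx : x ∈ Y i ∪ Y j) (hxgi : x ≠ g i) (hxgj : x ≠ g j) (hxhj : x ≠ h j) :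
    v x ≤ v (h i) := by
  refine hh_max x (mem_stage2Pool.mpr ⟨union_subset (hY_sub i) (hY_sub j) hx, ?_, ?_⟩)
  · rintro k rfl
    rcases eq_or_eq_of_mem_of_mem_union hY_disj (hg_picks k) hx with rfl | rfl
    exacts [hxgi rfl, hxgj rfl]
  · rintro k hik rfl
    rcases eq_or_eq_of_mem_of_mem_union hY_disj (hh_picks k) hx with rfl | rfl
    exacts [lt_irrefl k hik, hxhj rfl]

end Picking

theorem stmt5_general {α : Type*} [DecidableEq α] (n : ℕ) (M : Finset α)
    (w : Fin n → α → ℝ) (hw : ∀ i g, 0 ≤ w i g)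
    (g h : Fin n → α)
    -- stage 1: each agent picks a remaining item maximizing their weight
    (hg_mem : ∀ i, g i ∈ stage1Pool M g i)
    (hg_max : ∀ i, ∀ x ∈ stage1Pool M g i, w i x ≤ w i (g i))
    -- stage 2: in reversed order, each agent picks a remaining item maximizing their weight
    (hh_mem : ∀ i, h i ∈ stage2Pool M g h i)
    (hh_max : ∀ i, ∀ x ∈ stage2Pool M g h i, w i x ≤ w i (h i))
    -- resulting allocation: a partition of M in which agent i holds its two picks,
    -- leftover items are distributed arbitrarily
    (Y : Fin n → Finset α)
    (hY_sub : ∀ i, Y i ⊆ M)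
    (hY_disj : ∀ i j, i ≠ j → Disjoint (Y i) (Y j))
    (hY_picks : ∀ i, g i ∈ Y i ∧ h i ∈ Y i) :
    ∀ i j, i ≠ j → pd (w i) (Y i) ≥ mu (pd (w i)) (Y i ∪ Y j) := by
  intro i j hij
  have hg_picks k := (hY_picks k).1
  have hh_picks k := (hY_picks k).2
  have hba := second_pick_le_first (hh_mem i) (hg_max i)
  have ha x (hx : x ∈ Y i ∪ Y j) (hxj : x ≠ g j) : w i x ≤ w i (g i) :=
    le_first_pick (hg_max i) hY_sub hY_disj hg_picks hx hxj
  have hbig x (hx : x ∈ Y i ∪ Y j) (hxb : w i (h i) < w i x) :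
      x = g i ∨ x = g j ∨ x = h j := by
    by_contra! ⟨hxgi, hxgj, hxhj⟩
    exact hxb.not_ge <|
      le_second_pick (hh_max i) hY_sub hY_disj hg_picks hh_picks hx hxgi hxgj hxhj
  have hmu : mu (pd (w i)) (Y i ∪ Y j) ≤ w i (g i) + w i (h i) := by
    rcases hij.lt_or_gt with hij | hji
    · refine mu_pd_le_add_of_card_le_three (hw i (h i)) hba (fun x hx => ?_) _ card_le_three
        (by simpa using hbig)
      obtain rfl | hxj := eq_or_ne x (g j)
      exacts [later_first_pick_le (hg_mem j) (hg_max i) hij, ha x hx hxj]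
    · refine mu_pd_le_add_of_big_mem_pair (hw i (h i)) hba (g i) (g j) ha fun x hx hxb => ?_
      obtain hx' | hx' | rfl := hbig x hx hxb
      exacts [.inl hx', .inr hx',
        absurd hxb (earlier_second_pick_le (hh_mem j) (hh_max i) hji).not_gt]
  have hgh : g i ≠ h i := (mem_stage2Pool.mp (hh_mem i)).2.1 i
  exact hmu.trans (add_le_pd (hg_picks i) (hh_picks i) hgh)

theorem stmt5 {α : Type*} [DecidableEq α] (n : ℕ) (M : Finset α)
    (hM : 2 * n ≤ M.card)
    (w : Fin n → α → ℝ) (hw : ∀ i g, 0 ≤ w i g)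
    (g h : Fin n → α)
    -- stage 1: each agent picks a remaining item maximizing their weight
    (hg_mem : ∀ i, g i ∈ stage1Pool M g i)
    (hg_max : ∀ i, ∀ x ∈ stage1Pool M g i, w i x ≤ w i (g i))
    -- stage 2: in reversed order, each agent picks a remaining item maximizing their weight
    (hh_mem : ∀ i, h i ∈ stage2Pool M g h i)
    (hh_max : ∀ i, ∀ x ∈ stage2Pool M g h i, w i x ≤ w i (h i))
    -- resulting allocation: a partition of M in which agent i holds its two picks,
    -- leftover items are distributed arbitrarily
    (Y : Fin n → Finset α)
    (hY_sub : ∀ i, Y i ⊆ M)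
    (hY_disj : ∀ i j, i ≠ j → Disjoint (Y i) (Y j))
    (hY_cover : Finset.univ.biUnion Y = M)
    (hY_picks : ∀ i, g i ∈ Y i ∧ h i ∈ Y i) :
    ∀ i j, i ≠ j → pd (w i) (Y i) ≥ mu (pd (w i)) (Y i ∪ Y j) :=
  stmt5_general n M w hw g h hg_mem hg_max hh_mem hh_max Y hY_sub hY_disj hY_picks
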